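/- arXiv:1305.1899 — 2 statements merged into one kernel-verified Lean document; each statement's English description precedes it below -/
import Mathlib

section
/- Under the biased-misbehavior mixture model with ℓ′ ≠ ℓ and f′ > (α_ℓ − α_{ℓ′})/(1 + α_ℓ − α_{ℓ′}), if the number of ratings satisfies n ≥ 12(f′ + (1−f′)α_{ℓ′}) / ((f′ + (1−f′)(α_{ℓ′} − α_ℓ))²) · ln(m/δ), then the majority label of the n ratings equals ℓ′ with probability at least 1 − δ. -/
/-!
Write `q = f' + (1 - f')α_{ℓ'}` for the probability of a vote for `ℓ'` and
`ε = f' + (1 - f')(α_{ℓ'} - α_ℓ)`, which is positive by the hypothesis on `f'`; every other label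
`k` gets at most `q - ε` of the probability mass. The lead of `k` over `ℓ'` is a sum of `n`
independent `{-1, 0, 1}`-valued variables, and the Chernoff bound at `t = ε / (6q)` shows that
`k` ties or beats `ℓ'` with probability at most `exp (-n ε² / (12 q)) ≤ δ / m`. A union bound over
the labels finishes the proof.
-/

open MeasureTheory ProbabilityTheory Finset Real

section VoteMargin

variable {β : Type*} [DecidableEq β]

def voteMargin (a b y : β) : ℝ := (if y = a then 1 else 0) - (if y = b then 1 else 0)

lemma sum_voteMargin {ι : Type*} [Fintype ι] (a b : β) (y : ι → β) :
    ∑ i, voteMargin a b (y i) = (#{i | y i = a} : ℝ) - #{i | y i = b} := by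
  simp only [voteMargin, sum_sub_distrib, sum_boole]

variable {Ω : Type*}

lemma exp_mul_voteMargin_comp (Y : Ω → β) {a b : β} (hab : a ≠ b) (t : ℝ) :
    (fun ω => exp (t * voteMargin a b (Y ω))) = fun ω => 1 +
      (exp t - 1) * {ω | Y ω = a}.indicator 1 ω + (exp (-t) - 1) * {ω | Y ω = b}.indicator 1 ω := by
  ext ω
  rcases eq_or_ne (Y ω) a with ha | ha
  · simp [voteMargin, ha, hab]
  rcases eq_or_ne (Y ω) b with hb | hb
  · simp [voteMargin, hb, hab.symm]
  · simp [voteMargin, ha, hb]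

variable [MeasurableSpace Ω] {P : Measure Ω} [IsProbabilityMeasure P]
  [MeasurableSpace β] [MeasurableSingletonClass β]

lemma measurable_voteMargin (a b : β) : Measurable (voteMargin a b) :=
  (Measurable.ite measurableSet_eq measurable_const measurable_const).sub
    (Measurable.ite measurableSet_eq measurable_const measurable_const)

lemma integrable_exp_mul_voteMargin {Y : Ω → β} (hY : Measurable Y) {a b : β} (hab : a ≠ b)
    (t : ℝ) : Integrable (fun ω => exp (t * voteMargin a b (Y ω))) P := by
  have hint : ∀ c, Integrable ({ω | Y ω = c}.indicator (1 : Ω → ℝ)) P :=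
    fun c => (integrable_const 1).indicator (hY (measurableSet_singleton c))
  rw [exp_mul_voteMargin_comp Y hab]
  exact ((integrable_const 1).add ((hint a).const_mul _)).add ((hint b).const_mul _)

lemma mgf_voteMargin {Y : Ω → β} (hY : Measurable Y) {a b : β} (hab : a ≠ b) (t : ℝ) :
    mgf (fun ω => voteMargin a b (Y ω)) P t =
      1 + (exp t - 1) * P.real {ω | Y ω = a} + (exp (-t) - 1) * P.real {ω | Y ω = b} := by
  have hS : ∀ c, MeasurableSet {ω | Y ω = c} := fun c => hY (measurableSet_singleton c)
  have hint : ∀ c, Integrable ({ω | Y ω = c}.indicator (1 : Ω → ℝ)) P :=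
    fun c => (integrable_const 1).indicator (hS c)
  have hint_a : Integrable (fun ω => 1 + (exp t - 1) * {ω | Y ω = a}.indicator 1 ω) P :=
    (integrable_const 1).add ((hint a).const_mul _)
  rw [mgf, exp_mul_voteMargin_comp Y hab, integral_add hint_a ((hint b).const_mul _),
    integral_add (integrable_const 1) ((hint a).const_mul _), integral_const, integral_const_mul,
    integral_const_mul, integral_indicator_one (hS a), integral_indicator_one (hS b)]
  simp

lemma exp_sub_one_le_add_sq {x : ℝ} (hx : |x| ≤ 1) : exp x - 1 ≤ x + x ^ 2 := by
  linarith [(abs_le.1 (abs_exp_sub_one_sub_id_le hx)).2]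

lemma mgf_voteMargin_le {Y : Ω → β} (hY : Measurable Y) {a b : β} (hab : a ≠ b) {q ε : ℝ}
    (hε : 0 < ε) (ha : P.real {ω | Y ω = a} + ε ≤ q) (hb : P.real {ω | Y ω = b} = q) :
    mgf (fun ω => voteMargin a b (Y ω)) P (ε / (6 * q)) ≤ exp (-(ε ^ 2 / (12 * q))) := by
  set p := P.real {ω | Y ω = a}
  set t := ε / (6 * q) with ht
  have hp : 0 ≤ p := measureReal_nonneg
  have hq : 0 < q := by linarith
  have ht0 : 0 < t := by positivity
  have ht1 : t ≤ 1 := by rw [ht, div_le_one (by positivity)]; linarith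
  have hqt : q * t = ε / 6 := by rw [ht]; field_simp
  have hup := exp_sub_one_le_add_sq (x := t) (by rwa [abs_of_pos ht0])
  have hdown := exp_sub_one_le_add_sq (x := -t) (by rwa [abs_neg, abs_of_pos ht0])
  -- with `q t = ε / 6` the quadratic terms cost at most `ε t / 3` against the linear gain `ε t`
  have hexponent : (exp t - 1) * p + (exp (-t) - 1) * q ≤ -(ε ^ 2 / (12 * q)) := by
    have hε2 : ε ^ 2 / (12 * q) = ε * t / 2 := by rw [ht]; field_simp; ring
    rw [hε2]
    nlinarith [mul_le_mul_of_nonneg_right hup hp, mul_le_mul_of_nonneg_right hdown hq.le,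
      mul_le_mul_of_nonneg_left ha (by positivity : 0 ≤ t + t ^ 2), mul_pos hε ht0]
  rw [mgf_voteMargin hY hab, hb]
  linarith [add_one_le_exp ((exp t - 1) * p + (exp (-t) - 1) * q), exp_le_exp.2 hexponent]

end VoteMargin

section Tail

variable {Ω ι : Type*} [MeasurableSpace Ω] {P : Measure Ω} [IsProbabilityMeasure P] [Fintype ι]

lemma measureReal_sum_nonneg_le_pow {X : ι → Ω → ℝ} (hX : ∀ i, Measurable (X i))
    (hindep : iIndepFun X P) {t c : ℝ} (ht : 0 ≤ t)
    (hint : ∀ i, Integrable (fun ω => exp (t * X i ω)) P) (hmgf : ∀ i, mgf (X i) P t ≤ c) :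
    P.real {ω | 0 ≤ ∑ i, X i ω} ≤ c ^ Fintype.card ι := by
  calc P.real {ω | 0 ≤ ∑ i, X i ω} = P.real {ω | 0 ≤ (∑ i, X i) ω} := by
        simp only [Finset.sum_apply]
    _ ≤ exp (-t * 0) * mgf (∑ i, X i) P t :=
      measure_ge_le_exp_mul_mgf 0 ht (hindep.integrable_exp_mul_sum hX fun i _ => hint i)
    _ = ∏ i, mgf (X i) P t := by rw [mul_zero, exp_zero, one_mul, hindep.mgf_sum hX]
    _ ≤ ∏ _i : ι, c := prod_le_prod (fun _ _ => mgf_nonneg) fun i _ => hmgf i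
    _ = c ^ Fintype.card ι := by rw [prod_const, card_univ]

variable {β : Type*} [DecidableEq β] [MeasurableSpace β] [MeasurableSingletonClass β]

lemma measureReal_count_le_count_le {r : ι → Ω → β} (hr : ∀ i, Measurable (r i))
    (hindep : iIndepFun r P) {a b : β} (hab : a ≠ b) {q ε : ℝ} (hε : 0 < ε)
    (ha : ∀ i, P.real {ω | r i ω = a} + ε ≤ q) (hb : ∀ i, P.real {ω | r i ω = b} = q) :
    P.real {ω | #{i | r i ω = b} ≤ #{i | r i ω = a}} ≤
      exp (-(ε ^ 2 / (12 * q))) ^ Fintype.card ι := by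
  rcases isEmpty_or_nonempty ι with _ | ⟨⟨i₀⟩⟩
  · simp
  have hq : 0 < q := by linarith [ha i₀, measureReal_nonneg (μ := P) (s := {ω | r i₀ ω = a})]
  have hcount : {ω | #{i | r i ω = b} ≤ #{i | r i ω = a}} =
      {ω | 0 ≤ ∑ i, voteMargin a b (r i ω)} := by
    ext ω
    simp only [Set.mem_ofPred_eq, sum_voteMargin, sub_nonneg, Nat.cast_le]
  rw [hcount]
  exact measureReal_sum_nonneg_le_pow (fun i => (measurable_voteMargin a b).comp (hr i))
    (hindep.comp _ fun _ => measurable_voteMargin a b) (by positivity)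
    (fun i => integrable_exp_mul_voteMargin (hr i) hab _)
    fun i => mgf_voteMargin_le (hr i) hab hε (ha i) (hb i)

lemma one_sub_sum_le_measureReal_forall (Q : ι → Ω → Prop) :
    1 - ∑ i, P.real {ω | ¬ Q i ω} ≤ P.real {ω | ∀ i, Q i ω} := by
  have hcompl : {ω | ∀ i, Q i ω}ᶜ = ⋃ i, {ω | ¬ Q i ω} := by ext; simp
  have hsplit := measureReal_union_le (μ := P) {ω | ∀ i, Q i ω} {ω | ∀ i, Q i ω}ᶜ
  rw [Set.union_compl_self, probReal_univ, hcompl] at hsplit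
  linarith [measureReal_iUnion_fintype_le (μ := P) fun i => {ω | ¬ Q i ω}]

end Tail

lemma exp_neg_inv_pow_le_inv {C y : ℝ} {n : ℕ} (hC : 0 < C) (hy : 0 < y)
    (hn : C * log y ≤ n) : exp (-C⁻¹) ^ n ≤ y⁻¹ := by
  have hlog : log y ≤ n * C⁻¹ := by rwa [← div_eq_mul_inv, le_div_iff₀ hC, mul_comm]
  calc exp (-C⁻¹) ^ n = exp (-(n * C⁻¹)) := by rw [← exp_nat_mul, mul_neg]
    _ ≤ exp (-log y) := by gcongr
    _ = y⁻¹ := by rw [exp_neg, exp_log hy]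

theorem biased_misbehaving_users_win_general
    {Ω : Type*} [MeasurableSpace Ω] (P : Measure Ω) [IsProbabilityMeasure P]
    (m n : ℕ) (α : Fin m → ℝ) (r : Fin n → Ω → Fin m)
    (hmeas : ∀ j, Measurable (r j))
    (hindep : iIndepFun r P)
    (hα_pos : ∀ k, 0 < α k)
    (ℓ ℓ' : Fin m) (hℓ : ∀ k, k ≠ ℓ → α k < α ℓ) (hne : ℓ' ≠ ℓ)
    (f' : ℝ) (hf1 : f' ≤ 1)
    (hf : (α ℓ - α ℓ') / (1 + α ℓ - α ℓ') < f')
    (hdist : ∀ j k, P {ω | r j ω = k} =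
      ENNReal.ofReal (f' * (if k = ℓ' then 1 else 0) + (1 - f') * α k))
    (δ : ℝ) (hδ0 : 0 < δ)
    (hn : 12 * (f' + (1 - f') * α ℓ') / ((f' + (1 - f') * (α ℓ' - α ℓ)) ^ 2) *
        Real.log (m / δ) ≤ (n : ℝ)) :
    1 - δ ≤ (P {ω | ∀ k, k ≠ ℓ' →
      (Finset.univ.filter fun j => r j ω = k).card <
      (Finset.univ.filter fun j => r j ω = ℓ').card}).toReal := by
  set q := f' + (1 - f') * α ℓ'
  set ε := f' + (1 - f') * (α ℓ' - α ℓ)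
  have hm : 0 < (m : ℝ) := Nat.cast_pos.2 ℓ.pos
  have hε : 0 < ε := by
    have := (div_lt_iff₀ (by linarith [hℓ ℓ' hne])).1 hf
    linarith
  have hq : 0 < q := by linarith [mul_nonneg (sub_nonneg.2 hf1) (hα_pos ℓ).le]
  have hbig : ∀ j, P.real {ω | r j ω = ℓ'} = q := fun j => by
    rw [measureReal_def, hdist, if_pos rfl, mul_one, ENNReal.toReal_ofReal hq.le]
  have hsmall : ∀ k, k ≠ ℓ' → ∀ j, P.real {ω | r j ω = k} + ε ≤ q := fun k hk j => by
    have hαk : α k ≤ α ℓ := by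
      rcases eq_or_ne k ℓ with rfl | hkℓ
      exacts [le_rfl, (hℓ k hkℓ).le]
    have hpos := mul_nonneg (sub_nonneg.2 hf1) (hα_pos k).le
    rw [measureReal_def, hdist, if_neg hk, mul_zero, zero_add, ENNReal.toReal_ofReal hpos]
    linarith [mul_le_mul_of_nonneg_left hαk (sub_nonneg.2 hf1)]
  have htail : exp (-(ε ^ 2 / (12 * q))) ^ n ≤ δ / m := by
    simpa only [inv_div] using exp_neg_inv_pow_le_inv (by positivity) (by positivity) hn
  have hbad : ∀ k, P.real {ω | ¬ (k ≠ ℓ' → #{j | r j ω = k} < #{j | r j ω = ℓ'})} ≤ δ / m := by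
    intro k
    rcases eq_or_ne k ℓ' with rfl | hk
    · simpa using div_nonneg hδ0.le hm.le
    calc _ = P.real {ω | #{j | r j ω = ℓ'} ≤ #{j | r j ω = k}} := by simp [hk]
      _ ≤ exp (-(ε ^ 2 / (12 * q))) ^ n := by
        simpa using measureReal_count_le_count_le hmeas hindep hk hε (hsmall k hk) hbig
      _ ≤ δ / m := htail
  calc 1 - δ = 1 - ∑ _k : Fin m, δ / m := by
        rw [sum_const, card_univ, Fintype.card_fin, nsmul_eq_mul, mul_div_cancel₀ _ hm.ne']
    _ ≤ 1 - ∑ k, P.real {ω | ¬ (k ≠ ℓ' → #{j | r j ω = k} < #{j | r j ω = ℓ'})} := by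
      gcongr with k; exact hbad k
    _ ≤ _ := one_sub_sum_le_measureReal_forall _

/-- Biased misbehaving users win: with `n` i.i.d. ratings each distributed as the mixture
`k ↦ f'·1[k = ℓ'] + (1-f')α_k` (fraction `f'` deterministically rating `ℓ' ≠ ℓ`, the rest
categorical `α` with unique argmax `ℓ`), if `f' > (α_ℓ - α_{ℓ'})/(1 + α_ℓ - α_{ℓ'})` and
`n ≥ 12(f' + (1-f')α_{ℓ'})/((f' + (1-f')(α_{ℓ'} - α_ℓ))²) · ln(m/δ)`, then with
probability at least `1 - δ` the majority label of the `n` ratings is `ℓ'`. -/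
theorem biased_misbehaving_users_win
    {Ω : Type*} [MeasurableSpace Ω] (P : Measure Ω) [IsProbabilityMeasure P]
    (m n : ℕ) (hm : 0 < m) (α : Fin m → ℝ) (r : Fin n → Ω → Fin m)
    (hmeas : ∀ j, Measurable (r j))
    (hindep : iIndepFun r P)
    (hα_pos : ∀ k, 0 < α k) (hα_sum : ∑ k, α k = 1)
    (ℓ ℓ' : Fin m) (hℓ : ∀ k, k ≠ ℓ → α k < α ℓ) (hne : ℓ' ≠ ℓ)
    (f' : ℝ) (hf1 : f' ≤ 1)
    (hf : (α ℓ - α ℓ') / (1 + α ℓ - α ℓ') < f')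
    (hdist : ∀ j k, P {ω | r j ω = k} =
      ENNReal.ofReal (f' * (if k = ℓ' then 1 else 0) + (1 - f') * α k))
    (δ : ℝ) (hδ0 : 0 < δ) (hδ1 : δ < 1)
    (hn : 12 * (f' + (1 - f') * α ℓ') / ((f' + (1 - f') * (α ℓ' - α ℓ)) ^ 2) *
        Real.log (m / δ) ≤ (n : ℝ)) :
    1 - δ ≤ (P {ω | ∀ k, k ≠ ℓ' →
      (Finset.univ.filter fun j => r j ω = k).card <
      (Finset.univ.filter fun j => r j ω = ℓ').card}).toReal :=
  biased_misbehaving_users_win_general P m n α r hmeas hindep hα_pos ℓ ℓ' hℓ hne f' hf1 hf hdist δ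
    hδ0 hn
end

section
/- Under the biased-misbehavior mixture for the average scoring rule, where each rating equals ℓ′ with probability f′ and is categorical with parameters α (mean γ) otherwise, the mean of the mixed distribution equals (1−f′)γ + f′ℓ′, so |mixed mean − γ| = f′·|ℓ′ − γ|. Consequently, if n ≥ (3/ε²)ln(2m/δ), then with probability at least 1−δ, f′|ℓ′ − γ| − ε√(m(γ + f′ℓ′ − γf′)) − mε² ≤ |r̂ − γ| ≤ ε√(m(γ + f′ℓ′ − γf′)) + mε² + f′|ℓ′ − γ|. -/
open MeasureTheory ProbabilityTheory Finset Real

/-!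
The ratings are i.i.d. with the mixed law `q = f'·1[· = ℓ'] + (1 - f')·α`, whose mean
`μ = (1 - f')γ + f'ℓ'` lies at distance `f'|ℓ' - γ|` from `γ`. Each rating value lies in
`[0, m]`, so by convexity of `exp` its cumulant generating function is at most the Poisson one
`μ/m·(e^{sm} - 1)`. Chernoff's method, with `(1 + v) log (1 + v) - v ≥ 3v²/(6 + 2v)` and
`(1 - x) log (1 - x) + x ≥ x²/2`, then gives `|r̂ - μ| ≤ ε√(mμ) + mε²` outside an event of
probability at most `2 exp (-nε²/3) ≤ δ`, and the triangle inequality through `μ` concludes.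
-/

lemma apply_le_apply_of_hasDerivAt_nonneg {f f' : ℝ → ℝ} {a b : ℝ} (hab : a ≤ b)
    (hf : ∀ u ∈ Set.Icc a b, HasDerivAt f (f' u) u) (hf' : ∀ u ∈ Set.Icc a b, 0 ≤ f' u) :
    f a ≤ f b :=
  monotoneOn_of_hasDerivWithinAt_nonneg (convex_Icc a b)
    (fun u hu => (hf u hu).continuousAt.continuousWithinAt)
    (fun u hu => (hf u (interior_subset hu)).hasDerivWithinAt)
    (fun u hu => hf' u (interior_subset hu)) ⟨le_rfl, hab⟩ ⟨hab, le_rfl⟩ hab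

lemma two_mul_div_two_add_le_log_one_add {v : ℝ} (hv : 0 ≤ v) :
    2 * v / (2 + v) ≤ log (1 + v) := by
  -- first term of the series of `artanh`, at the point `x` with `(1 + x) / (1 - x) = 1 + v`
  have h := sum_range_le_log_div (x := v / (2 + v)) (by positivity)
    ((div_lt_one (by positivity)).2 (by linarith)) 1
  have hx : (1 + v / (2 + v)) / (1 - v / (2 + v)) = 1 + v := by
    field_simp; ring
  rw [hx] at h
  simp only [range_one, sum_singleton] at h
  linarith [show 2 * v / (2 + v) = 2 * (v / (2 + v)) by ring]

lemma three_mul_sq_div_le_one_add_mul_log_one_add_sub {v : ℝ} (hv : 0 ≤ v) :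
    3 * v ^ 2 / (6 + 2 * v) ≤ (1 + v) * log (1 + v) - v := by
  let g : ℝ → ℝ := fun u => (1 + u) * log (1 + u) - u - (3 / 2 * u - 9 / 2 + 27 / 2 / (3 + u))
  suffices g 0 ≤ g v by
    have heq : 3 * v ^ 2 / (6 + 2 * v) = 3 / 2 * v - 9 / 2 + 27 / 2 / (3 + v) := by
      field_simp; ring
    norm_num [g] at this
    linarith
  refine apply_le_apply_of_hasDerivAt_nonneg
    (f' := fun u => log (1 + u) - 3 / 2 + 27 / 2 / (3 + u) ^ 2) hv (fun u hu => ?_) (fun u hu => ?_)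
  · have h1 : 1 + u ≠ 0 := by linarith [hu.1]
    have h3 : 3 + u ≠ 0 := by linarith [hu.1]
    have := ((((hasDerivAt_id u).const_add 1).mul (((hasDerivAt_id u).const_add 1).log h1)).sub
      (hasDerivAt_id u)).sub ((((hasDerivAt_id u).const_mul (3 / 2)).sub_const (9 / 2)).add
      ((hasDerivAt_const u (27 / 2 : ℝ)).div ((hasDerivAt_id u).const_add 3) h3))
    refine this.congr_deriv ?_
    simp only [id]
    field_simp
    ring
  · have h2 : 0 < 2 + u := by linarith [hu.1]
    have h3 : 0 < 3 + u := by linarith [hu.1]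
    have hfrac : 3 / 2 ≤ 2 * u / (2 + u) + 27 / 2 / (3 + u) ^ 2 := by
      rw [div_add_div _ _ h2.ne' (by positivity), le_div_iff₀ (by positivity)]
      nlinarith [pow_nonneg hu.1 3]
    linarith [two_mul_div_two_add_le_log_one_add hu.1]

lemma sq_div_two_le_one_sub_mul_log_one_sub_add {x : ℝ} (hx0 : 0 ≤ x) (hx1 : x < 1) :
    x ^ 2 / 2 ≤ (1 - x) * log (1 - x) + x := by
  let g : ℝ → ℝ := fun u => (1 - u) * log (1 - u) + u - u ^ 2 / 2
  suffices g 0 ≤ g x by norm_num [g] at this; linarith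
  refine apply_le_apply_of_hasDerivAt_nonneg (f' := fun u => -log (1 - u) - u) hx0
    (fun u hu => ?_) (fun u hu => ?_)
  · have h1 : 1 - u ≠ 0 := by linarith [hu.2]
    have := ((((hasDerivAt_id u).const_sub 1).mul (((hasDerivAt_id u).const_sub 1).log h1)).add
      (hasDerivAt_id u)).sub ((hasDerivAt_pow 2 u).div_const 2)
    refine this.congr_deriv ?_
    simp only [id]
    field_simp
    ring
  · linarith [log_le_sub_one_of_pos (show 0 < 1 - u by linarith [hu.2])]

lemma exp_mul_le_one_add_div_mul_exp_sub_one {s x M : ℝ} (hM : 0 < M) (hx : x ∈ Set.Icc 0 M) :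
    exp (s * x) ≤ 1 + x / M * (exp (s * M) - 1) := by
  have hxM : x / M ≤ 1 := (div_le_one hM).2 hx.2
  have h := convexOn_exp.2 (Set.mem_univ 0) (Set.mem_univ (s * M)) (sub_nonneg.2 hxM)
    (div_nonneg hx.1 hM.le) (by ring)
  have harg : (1 - x / M) • (0 : ℝ) + (x / M) • (s * M) = s * x := by
    simp only [smul_eq_mul]; field_simp; ring
  rw [harg] at h
  simp only [smul_eq_mul, exp_zero] at h
  linarith

section

variable {Ω : Type*} [MeasurableSpace Ω] {P : Measure Ω} [IsProbabilityMeasure P]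

lemma cgf_le_of_mem_Icc {X : Ω → ℝ} {M : ℝ} (hM : 0 < M) (hX : Measurable X)
    (hXI : ∀ ω, X ω ∈ Set.Icc 0 M) (s : ℝ) :
    cgf X P s ≤ P[X] / M * (exp (s * M) - 1) := by
  have hint : Integrable (fun ω => exp (s * X ω)) P :=
    integrable_exp_mul_of_mem_Icc hX.aemeasurable (ae_of_all _ hXI)
  have hXint : Integrable X P := .of_mem_Icc 0 M hX.aemeasurable (ae_of_all _ hXI)
  have hmgf : mgf X P s ≤ 1 + P[X] / M * (exp (s * M) - 1) := calc
    mgf X P s ≤ ∫ ω, 1 + X ω / M * (exp (s * M) - 1) ∂P :=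
      integral_mono hint ((integrable_const 1).add ((hXint.div_const M).mul_const _))
        fun ω => exp_mul_le_one_add_div_mul_exp_sub_one hM (hXI ω)
    _ = 1 + P[X] / M * (exp (s * M) - 1) := by
      rw [integral_add (integrable_const 1) ((hXint.div_const M).mul_const _), integral_const,
        integral_mul_const, integral_div]
      simp
  calc cgf X P s ≤ mgf X P s - 1 := log_le_sub_one_of_pos (mgf_pos hint)
    _ ≤ P[X] / M * (exp (s * M) - 1) := by linarith

variable {ι : Type*} [Fintype ι] {X : ι → Ω → ℝ} {M μ : ℝ}

lemma cgf_sum_le_of_mem_Icc (hM : 0 < M) (hX : ∀ i, Measurable (X i)) (hindep : iIndepFun X P)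
    (hXI : ∀ i ω, X i ω ∈ Set.Icc 0 M) (hmean : ∀ i, P[X i] = μ) (s : ℝ) :
    cgf (∑ i, X i) P s ≤ Fintype.card ι * (μ / M * (exp (s * M) - 1)) := by
  rw [hindep.cgf_sum hX fun i _ =>
    integrable_exp_mul_of_mem_Icc (hX i).aemeasurable (ae_of_all _ (hXI i))]
  calc ∑ i, cgf (X i) P s ≤ ∑ _i : ι, μ / M * (exp (s * M) - 1) :=
        sum_le_sum fun i _ => hmean i ▸ cgf_le_of_mem_Icc hM (hX i) (hXI i) s
    _ = Fintype.card ι * (μ / M * (exp (s * M) - 1)) := by simp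

lemma measureReal_mul_add_le_sum_le (hM : 0 < M) (hX : ∀ i, Measurable (X i))
    (hindep : iIndepFun X P) (hXI : ∀ i ω, X i ω ∈ Set.Icc 0 M) (hmean : ∀ i, P[X i] = μ)
    (hμ : 0 < μ) {t : ℝ} (ht : 0 ≤ t) :
    P.real {ω | Fintype.card ι * (μ + t) ≤ ∑ i, X i ω} ≤
      exp (-(Fintype.card ι * (3 * t ^ 2 / (M * (6 * μ + 2 * t))))) := by
  set n : ℝ := (Fintype.card ι : ℝ)
  set v := t / μ
  have hv : 0 ≤ v := div_nonneg ht hμ.le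
  -- the minimiser of the Chernoff exponent `-θ n (μ + t) + n μ / M (exp (θ M) - 1)`
  set θ := log (1 + v) / M
  have hexp : exp (θ * M) = 1 + v := by
    rw [div_mul_cancel₀ _ hM.ne', exp_log (by linarith)]
  have hint := hindep.integrable_exp_mul_sum (t := θ) (s := univ) hX fun i _ =>
    integrable_exp_mul_of_mem_Icc (hX i).aemeasurable (ae_of_all _ (hXI i))
  have hchernoff := measure_ge_le_exp_cgf (n * (μ + t))
    (div_nonneg (log_nonneg (by linarith)) hM.le) hint
  simp only [Finset.sum_apply] at hchernoff
  refine hchernoff.trans (exp_le_exp.2 ?_)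
  have hcgf := cgf_sum_le_of_mem_Icc hM hX hindep hXI hmean θ
  rw [hexp] at hcgf
  have hbound := mul_le_mul_of_nonneg_left (three_mul_sq_div_le_one_add_mul_log_one_add_sub hv)
    (by positivity : 0 ≤ n * (μ / M))
  have h1 : -θ * (n * (μ + t)) + n * (μ / M * (1 + v - 1)) =
      -(n * (μ / M)) * ((1 + v) * log (1 + v) - v) := by
    simp only [θ, v]; field_simp; ring
  have h2 : n * (μ / M) * (3 * v ^ 2 / (6 + 2 * v)) =
      n * (3 * t ^ 2 / (M * (6 * μ + 2 * t))) := by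
    simp only [v]; field_simp
  linarith

lemma measureReal_sum_lt_mul_sub_le (hM : 0 < M) (hX : ∀ i, Measurable (X i))
    (hindep : iIndepFun X P) (hXI : ∀ i ω, X i ω ∈ Set.Icc 0 M) (hmean : ∀ i, P[X i] = μ)
    (hμ : 0 < μ) {t : ℝ} (ht : 0 ≤ t) :
    P.real {ω | ∑ i, X i ω < Fintype.card ι * (μ - t)} ≤
      exp (-(Fintype.card ι * (t ^ 2 / (2 * M * μ)))) := by
  set n : ℝ := (Fintype.card ι : ℝ)
  rcases le_or_gt μ t with hμt | htμ
  · have hempty : {ω | ∑ i, X i ω < n * (μ - t)} = ∅ := by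
      refine Set.eq_empty_of_forall_notMem fun ω hω => ?_
      have hS : 0 ≤ ∑ i, X i ω := sum_nonneg fun i _ => (hXI i ω).1
      have : n * (μ - t) ≤ 0 := mul_nonpos_of_nonneg_of_nonpos (by positivity) (by linarith)
      exact not_lt.2 (this.trans hS) hω
    rw [hempty, measureReal_empty]
    positivity
  set x := t / μ
  have hx0 : 0 ≤ x := div_nonneg ht hμ.le
  have hx1 : x < 1 := (div_lt_one hμ).2 htμ
  set θ := log (1 - x) / M
  have hexp : exp (θ * M) = 1 - x := by
    rw [div_mul_cancel₀ _ hM.ne', exp_log (by linarith)]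
  have hint := hindep.integrable_exp_mul_sum (t := θ) (s := univ) hX fun i _ =>
    integrable_exp_mul_of_mem_Icc (hX i).aemeasurable (ae_of_all _ (hXI i))
  have hchernoff := measure_le_le_exp_cgf (n * (μ - t))
    (div_nonpos_of_nonpos_of_nonneg (log_nonpos (by linarith) (by linarith)) hM.le) hint
  simp only [Finset.sum_apply] at hchernoff
  refine (measureReal_mono (Set.ofPred_subset_ofPred.2 fun ω hω => hω.le)).trans
    (hchernoff.trans (exp_le_exp.2 ?_))
  have hcgf := cgf_sum_le_of_mem_Icc hM hX hindep hXI hmean θ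
  rw [hexp] at hcgf
  have hbound := mul_le_mul_of_nonneg_left (sq_div_two_le_one_sub_mul_log_one_sub_add hx0 hx1)
    (by positivity : 0 ≤ n * (μ / M))
  have h1 : -θ * (n * (μ - t)) + n * (μ / M * (1 - x - 1)) =
      -(n * (μ / M)) * ((1 - x) * log (1 - x) + x) := by
    simp only [θ, x]; field_simp; ring
  have h2 : n * (μ / M) * (x ^ 2 / 2) = n * (t ^ 2 / (2 * M * μ)) := by
    simp only [x]; field_simp
  linarith

lemma one_sub_two_mul_exp_le_measureReal_abs_sum_div_sub_le [Nonempty ι] (hM : 0 < M)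
    (hX : ∀ i, Measurable (X i)) (hindep : iIndepFun X P) (hXI : ∀ i ω, X i ω ∈ Set.Icc 0 M)
    (hmean : ∀ i, P[X i] = μ) (hμ : 0 < μ) {ε t : ℝ} (hεt : ε ^ 2 * (M * μ) ≤ t ^ 2)
    (hMt : M * ε ^ 2 ≤ t) :
    1 - 2 * exp (-(Fintype.card ι * (ε ^ 2 / 3))) ≤
      P.real {ω | |(∑ i, X i ω) / Fintype.card ι - μ| ≤ t} := by
  set n : ℝ := (Fintype.card ι : ℝ)
  have hn : 0 < n := by positivity
  have ht : 0 ≤ t := (by positivity : 0 ≤ M * ε ^ 2).trans hMt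
  have hup : P.real {ω | n * (μ + t) ≤ ∑ i, X i ω} ≤ exp (-(n * (ε ^ 2 / 3))) := by
    refine (measureReal_mul_add_le_sum_le hM hX hindep hXI hmean hμ ht).trans (exp_le_exp.2 ?_)
    have : ε ^ 2 / 3 ≤ 3 * t ^ 2 / (M * (6 * μ + 2 * t)) := by
      rw [div_le_div_iff₀ (by norm_num) (by positivity)]
      nlinarith
    nlinarith
  have hlow : P.real {ω | ∑ i, X i ω < n * (μ - t)} ≤ exp (-(n * (ε ^ 2 / 3))) := by
    refine (measureReal_sum_lt_mul_sub_le hM hX hindep hXI hmean hμ ht).trans (exp_le_exp.2 ?_)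
    have : ε ^ 2 / 3 ≤ t ^ 2 / (2 * M * μ) := by
      rw [div_le_div_iff₀ (by norm_num) (by positivity)]
      nlinarith [sq_nonneg ε]
    nlinarith
  have hE : MeasurableSet {ω | |(∑ i, X i ω) / n - μ| ≤ t} :=
    measurableSet_le (by fun_prop) measurable_const
  have hcompl : {ω | |(∑ i, X i ω) / n - μ| ≤ t}ᶜ ⊆
      {ω | n * (μ + t) ≤ ∑ i, X i ω} ∪ {ω | ∑ i, X i ω < n * (μ - t)} := by
    intro ω hω
    rcases lt_abs.1 (not_le.1 hω : t < |(∑ i, X i ω) / n - μ|) with h | h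
    · left
      have := (lt_div_iff₀ hn).1 (by linarith : μ + t < (∑ i, X i ω) / n)
      exact (by linarith : n * (μ + t) ≤ ∑ i, X i ω)
    · right
      have := (div_lt_iff₀ hn).1 (by linarith : (∑ i, X i ω) / n < μ - t)
      exact (by linarith : ∑ i, X i ω < n * (μ - t))
  have := (measureReal_mono (μ := P) hcompl).trans (measureReal_union_le _ _)
  rw [probReal_compl_eq_one_sub hE] at this
  linarith

lemma integral_comp_eq_sum_mul_of_measure_eq {κ : Type*} [Fintype κ] [MeasurableSpace κ]
    [MeasurableSingletonClass κ] {Y : Ω → κ} (hY : Measurable Y) {q : κ → ℝ}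
    (hq0 : ∀ k, 0 ≤ q k) (hq : ∀ k, P {ω | Y ω = k} = ENNReal.ofReal (q k)) (g : κ → ℝ) :
    ∫ ω, g (Y ω) ∂P = ∑ k, g k * q k := by
  have : IsProbabilityMeasure (P.map Y) := Measure.isProbabilityMeasure_map hY.aemeasurable
  rw [← integral_map hY.aemeasurable (measurable_of_finite g).aestronglyMeasurable,
    integral_fintype .of_finite]
  refine sum_congr rfl fun k _ => ?_
  rw [measureReal_def, Measure.map_apply hY (measurableSet_singleton k), smul_eq_mul, mul_comm]
  exact congrArg (g k * ·)
    ((congrArg ENNReal.toReal (hq k)).trans (ENNReal.toReal_ofReal (hq0 k)))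

lemma one_sub_two_mul_exp_le_measureReal_abs_average_rating_sub_le [Nonempty ι] {m : ℕ}
    (hm : 0 < m) {r : ι → Ω → Fin m} (hr : ∀ j, Measurable (r j)) (hindep : iIndepFun r P)
    {q : Fin m → ℝ} (hq0 : ∀ k, 0 ≤ q k)
    (hq : ∀ j k, P {ω | r j ω = k} = ENNReal.ofReal (q k)) {μ : ℝ}
    (hμq : ∑ k : Fin m, ((k : ℕ) + 1 : ℝ) * q k = μ) {ε : ℝ} (hε : 0 ≤ ε) :
    1 - 2 * exp (-(Fintype.card ι * (ε ^ 2 / 3))) ≤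
      P.real {ω | |(∑ j, ((r j ω : ℕ) + 1 : ℝ)) / Fintype.card ι - μ| ≤
        ε * √(m * μ) + m * ε ^ 2} := by
  let value : Fin m → ℝ := fun k => (k : ℕ) + 1
  let X : ι → Ω → ℝ := fun j => value ∘ r j
  have hX : ∀ j, Measurable (X j) := fun j => (measurable_of_finite value).comp (hr j)
  have hXI : ∀ j ω, X j ω ∈ Set.Icc (0 : ℝ) m := fun j ω =>
    show ((r j ω : ℕ) + 1 : ℝ) ∈ _ from ⟨by positivity, by exact_mod_cast (r j ω).isLt⟩
  have hmean : ∀ j, P[X j] = μ := fun j =>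
    (integral_comp_eq_sum_mul_of_measure_eq (hr j) hq0 (hq j) value).trans hμq
  obtain ⟨j₀⟩ := ‹Nonempty ι›
  have hμ : 1 ≤ μ := by
    have hint : Integrable (X j₀) P :=
      .of_mem_Icc 0 m (hX j₀).aemeasurable (ae_of_all _ (hXI j₀))
    have := integral_mono (integrable_const (μ := P) (1 : ℝ)) hint fun ω =>
      (le_add_of_nonneg_left (Nat.cast_nonneg _) : (1 : ℝ) ≤ X j₀ ω)
    simpa [hmean] using this
  have hsqrt : 0 ≤ ε * √(m * μ) := by positivity
  refine one_sub_two_mul_exp_le_measureReal_abs_sum_div_sub_le (by exact_mod_cast hm) hX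
    (hindep.comp (fun _ => value) fun _ => measurable_of_finite _) hXI hmean (by linarith) ?_
    (le_add_of_nonneg_left hsqrt)
  calc ε ^ 2 * (m * μ) = (ε * √(m * μ)) ^ 2 := by rw [mul_pow, sq_sqrt (by positivity)]
    _ ≤ (ε * √(m * μ) + m * ε ^ 2) ^ 2 :=
      pow_le_pow_left₀ hsqrt (le_add_of_nonneg_right (by positivity)) 2

end

lemma two_mul_exp_neg_le_of_log_le {m n ε δ : ℝ} (hm : 1 ≤ m) (hε : ε ≠ 0) (hδ : 0 < δ)
    (hn : 3 / ε ^ 2 * log (2 * m / δ) ≤ n) :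
    2 * exp (-(n * (ε ^ 2 / 3))) ≤ δ := by
  have hlog : log (2 * m / δ) ≤ n * (ε ^ 2 / 3) := by
    have := mul_le_mul_of_nonneg_right hn (by positivity : 0 ≤ ε ^ 2 / 3)
    rwa [show 3 / ε ^ 2 * log (2 * m / δ) * (ε ^ 2 / 3) = log (2 * m / δ) by field_simp] at this
  calc 2 * exp (-(n * (ε ^ 2 / 3))) ≤ 2 * exp (-log (2 * m / δ)) := by gcongr
    _ = δ / m := by rw [exp_neg, exp_log (by positivity)]; field_simp
    _ ≤ δ := div_le_self hδ.le hm

lemma abs_sub_bounds_of_abs_sub_le {a b c t : ℝ} (h : |a - b| ≤ t) :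
    |b - c| - t ≤ |a - c| ∧ |a - c| ≤ t + |b - c| := by
  rw [← sub_sub_sub_cancel_right a b c] at h
  have := abs_le.1 ((abs_abs_sub_abs_le_abs_sub (a - c) (b - c)).trans h)
  constructor <;> linarith [this.1, this.2]

lemma sum_mul_mixture {κ : Type*} [Fintype κ] [DecidableEq κ] (v α : κ → ℝ) (ℓ : κ)
    (f : ℝ) :
    ∑ k, v k * (f * (if k = ℓ then 1 else 0) + (1 - f) * α k) =
      (1 - f) * ∑ k, v k * α k + f * v ℓ := by
  simp only [mul_add, sum_add_distrib, mul_ite, mul_one, mul_zero, sum_ite_eq', mem_univ,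
    if_true, mul_sum]
  simp only [mul_left_comm (v _)]
  ring

theorem average_scoring_biased_misbehavior_general
    {Ω : Type*} [MeasurableSpace Ω] (P : Measure Ω) [IsProbabilityMeasure P]
    (m n : ℕ) (hm : 0 < m) (hn0 : 0 < n) (α : Fin m → ℝ) (r : Fin n → Ω → Fin m)
    (hmeas : ∀ j, Measurable (r j))
    (hindep : iIndepFun r P)
    (ℓ' : Fin m) (f' : ℝ) (hf0 : 0 ≤ f') (hf1 : f' ≤ 1)
    (hdist : ∀ j k, P {ω | r j ω = k} =
      ENNReal.ofReal (f' * (if k = ℓ' then 1 else 0) + (1 - f') * α k))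
    (hα_nonneg : ∀ k, 0 ≤ α k)
    (γ ℓ'v : ℝ) (hγ : γ = ∑ k : Fin m, ((k : ℕ) + 1 : ℝ) * α k)
    (hℓ'v : ℓ'v = ((ℓ' : ℕ) + 1 : ℝ))
    (ε δ : ℝ) (hε : 0 < ε) (hδ0 : 0 < δ)
    (hn : 3 / ε ^ 2 * Real.log (2 * m / δ) ≤ (n : ℝ)) :
    (∑ k : Fin m, ((k : ℕ) + 1 : ℝ) *
        (f' * (if k = ℓ' then 1 else 0) + (1 - f') * α k) = (1 - f') * γ + f' * ℓ'v) ∧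
    |((1 - f') * γ + f' * ℓ'v) - γ| = f' * |ℓ'v - γ| ∧
    1 - δ ≤ (P {ω |
      f' * |ℓ'v - γ| - ε * Real.sqrt (m * (γ + f' * ℓ'v - γ * f')) - m * ε ^ 2 ≤
        |(∑ j, ((r j ω : ℕ) + 1 : ℝ)) / n - γ| ∧
      |(∑ j, ((r j ω : ℕ) + 1 : ℝ)) / n - γ| ≤
        ε * Real.sqrt (m * (γ + f' * ℓ'v - γ * f')) + m * ε ^ 2 +
          f' * |ℓ'v - γ|}).toReal := by
  have hmix : ∑ k : Fin m, ((k : ℕ) + 1 : ℝ) *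
      (f' * (if k = ℓ' then 1 else 0) + (1 - f') * α k) = (1 - f') * γ + f' * ℓ'v := by
    rw [sum_mul_mixture, ← hγ, hℓ'v]
  have hdev : |((1 - f') * γ + f' * ℓ'v) - γ| = f' * |ℓ'v - γ| := by
    rw [show (1 - f') * γ + f' * ℓ'v - γ = f' * (ℓ'v - γ) by ring, abs_mul,
      abs_of_nonneg hf0]
  refine ⟨hmix, hdev, ?_⟩
  have hq0 : ∀ k, 0 ≤ f' * (if k = ℓ' then 1 else 0) + (1 - f') * α k := fun k =>
    add_nonneg (mul_nonneg hf0 (by split_ifs <;> norm_num))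
      (mul_nonneg (by linarith) (hα_nonneg k))
  have : Nonempty (Fin n) := ⟨⟨0, hn0⟩⟩
  have hconc := one_sub_two_mul_exp_le_measureReal_abs_average_rating_sub_le hm hmeas hindep hq0
    hdist (μ := γ + f' * ℓ'v - γ * f') (by rw [hmix]; ring) hε.le
  rw [Fintype.card_fin] at hconc
  have hδ := two_mul_exp_neg_le_of_log_le (by exact_mod_cast hm) hε.ne' hδ0 hn
  have hμγ : |γ + f' * ℓ'v - γ * f' - γ| = f' * |ℓ'v - γ| := by rw [← hdev]; ring_nf
  refine le_trans (by linarith) (hconc.trans (measureReal_mono fun ω hω => ?_))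
  have h := abs_sub_bounds_of_abs_sub_le (c := γ) hω
  rw [hμγ] at h
  exact ⟨by linarith [h.1], by linarith [h.2]⟩

/-- Average scoring rule under biased misbehavior: each of `n` i.i.d. ratings on `{1,…,m}`
(encoded as `Fin m`, index `k` standing for value `k+1`) equals `ℓ'` with probability `f'`
and is categorical `α` (mean `γ`) otherwise, so the mixed distribution is
`k ↦ f'·1[k = ℓ'] + (1-f')α_k`. The mixed mean equals `(1-f')γ + f'·ℓ'`, hence
`|mixed mean - γ| = f'|ℓ' - γ|`; and if `n ≥ (3/ε²)ln(2m/δ)` then with probability at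
least `1 - δ`,
`f'|ℓ' - γ| - ε√(m(γ + f'ℓ' - γf')) - mε² ≤ |r̂ - γ| ≤ ε√(m(γ + f'ℓ' - γf')) + mε² + f'|ℓ' - γ|`. -/
theorem average_scoring_biased_misbehavior
    {Ω : Type*} [MeasurableSpace Ω] (P : Measure Ω) [IsProbabilityMeasure P]
    (m n : ℕ) (hm : 0 < m) (hn0 : 0 < n) (α : Fin m → ℝ) (r : Fin n → Ω → Fin m)
    (hmeas : ∀ j, Measurable (r j))
    (hindep : iIndepFun r P)
    (ℓ' : Fin m) (f' : ℝ) (hf0 : 0 ≤ f') (hf1 : f' ≤ 1)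
    (hdist : ∀ j k, P {ω | r j ω = k} =
      ENNReal.ofReal (f' * (if k = ℓ' then 1 else 0) + (1 - f') * α k))
    (hα_nonneg : ∀ k, 0 ≤ α k) (hα_sum : ∑ k, α k = 1)
    (γ ℓ'v : ℝ) (hγ : γ = ∑ k : Fin m, ((k : ℕ) + 1 : ℝ) * α k)
    (hℓ'v : ℓ'v = ((ℓ' : ℕ) + 1 : ℝ))
    (ε δ : ℝ) (hε : 0 < ε) (hδ0 : 0 < δ) (hδ1 : δ < 1)
    (hn : 3 / ε ^ 2 * Real.log (2 * m / δ) ≤ (n : ℝ)) :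
    (∑ k : Fin m, ((k : ℕ) + 1 : ℝ) *
        (f' * (if k = ℓ' then 1 else 0) + (1 - f') * α k) = (1 - f') * γ + f' * ℓ'v) ∧
    |((1 - f') * γ + f' * ℓ'v) - γ| = f' * |ℓ'v - γ| ∧
    1 - δ ≤ (P {ω |
      f' * |ℓ'v - γ| - ε * Real.sqrt (m * (γ + f' * ℓ'v - γ * f')) - m * ε ^ 2 ≤
        |(∑ j, ((r j ω : ℕ) + 1 : ℝ)) / n - γ| ∧
      |(∑ j, ((r j ω : ℕ) + 1 : ℝ)) / n - γ| ≤
        ε * Real.sqrt (m * (γ + f' * ℓ'v - γ * f')) + m * ε ^ 2 +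
          f' * |ℓ'v - γ|}).toReal :=
  average_scoring_biased_misbehavior_general P m n hm hn0 α r hmeas hindep ℓ' f' hf0 hf1 hdist
    hα_nonneg γ ℓ'v hγ hℓ'v ε δ hε hδ0 hn
end
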